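/- Let μ ∈ ℂ with Re μ > 0 and let λ ∈ ℂ with |λ| = 1. If f ∈ F_μ satisfies f'(0) = (μ/π)(λ − 1), then f(z) = ((1 − z)/(1 − λz))^{μ/π} for all z ∈ D, where the power is defined via the branch of log((1−z)/(1−λz)) vanishing at z = 0. -/

import Mathlib

/-!
`P = P_f` has positive real part and `P(0) = 1`, so its Cayley transform `ω = (P - 1)/(P + 1)`
maps the disk into itself and fixes `0`. The normalisation of `f'(0)` says exactly that
`ω'(0) = λ`, and `|λ| = 1` puts us in the equality case of Schwarz's lemma: `ω(z) = λz`.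
Solving `P_f(z) = (1 + λz)/(1 - λz)` for `f'/f` shows that `f` and `((1 - z)/(1 - λz))^{μ/π}`
satisfy the same first-order linear ODE and agree at `0`.
-/

open Complex Set Metric

noncomputable section

/-- The open unit disk in `ℂ`. -/
def unitDisk : Set ℂ := Metric.ball (0 : ℂ) 1

/-- `P_f(z) = (2π/μ)·(z f'(z)/f(z)) + (1+z)/(1−z)`. -/
def Pfun (μ : ℂ) (f : ℂ → ℂ) (z : ℂ) : ℂ :=
  2 * (Real.pi : ℂ) / μ * (z * deriv f z / f z) + (1 + z) / (1 - z)

/-- Membership in the class `F_μ`: analytic, non-vanishing on the disk, `f(0) = 1`,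
and `Re P_f > 0` on the disk. -/
def memF (μ : ℂ) (f : ℂ → ℂ) : Prop :=
  AnalyticOnNhd ℂ f unitDisk ∧ (∀ z ∈ unitDisk, f z ≠ 0) ∧ f 0 = 1 ∧
    ∀ z ∈ unitDisk, 0 < (Pfun μ f z).re

/-- Membership in the class `F_μ(λ)`: `f ∈ F_μ` with `f'(0) = (μ/π)(λ − 1)`. -/
def memFlam (μ lam : ℂ) (f : ℂ → ℂ) : Prop :=
  memF μ f ∧ deriv f 0 = μ / (Real.pi : ℂ) * (lam - 1)

/-- The branch of `log f` vanishing at `0`: `log f(z) = ∫₀^z f'(ζ)/f(ζ) dζ`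
(integral over the segment from `0` to `z`). -/
def logf (f : ℂ → ℂ) (z : ℂ) : ℂ :=
  ∫ t in (0:ℝ)..1, deriv f (t * z) / f (t * z) * z

/-- The region of variability `V(z₀, λ) = {log f(z₀) : f ∈ F_μ(λ)}`. -/
def Vset (μ lam z₀ : ℂ) : Set ℂ := {w | ∃ f, memFlam μ lam f ∧ w = logf f z₀}

/-- `δ(w, λ) = (w + λ)/(1 + conj(λ) w)`. -/
def dl (lam w : ℂ) : ℂ := (w + lam) / (1 + (starRingEnd ℂ) lam * w)

/-- `log H_{a,λ}(z) = (μ/π)·∫₀^z (δ(aζ,λ) − 1)/((1 − δ(aζ,λ)ζ)(1 − ζ)) dζ`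
(integral over the segment from `0` to `z`). -/
def Hlog (μ lam a z : ℂ) : ℂ :=
  μ / (Real.pi : ℂ) *
    ∫ t in (0:ℝ)..1,
      (dl lam (a * (t * z)) - 1) /
        ((1 - dl lam (a * (t * z)) * (t * z)) * (1 - t * z)) * z

/-- The function `H_{a,λ}(z) = exp(log H_{a,λ}(z))`. -/
def Hfun (μ lam a z : ℂ) : ℂ := Complex.exp (Hlog μ lam a z)

/-- `c(z, λ)`. -/
def cfun (z lam : ℂ) : ℂ :=
  ((‖z‖ : ℂ) ^ 2 * ((starRingEnd ℂ) z - lam) * (1 - (starRingEnd ℂ) lam)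
      - (1 - lam) * (1 - (starRingEnd ℂ) lam * (starRingEnd ℂ) z)) /
    ((1 - z) * (1 - (‖z‖ : ℂ) ^ 2)
      * (1 + (‖z‖ : ℂ) ^ 2 - 2 * ((lam * z).re : ℂ)))

/-- `r(z, λ)`. -/
def rfun (z lam : ℂ) : ℝ :=
  (1 - ‖lam‖ ^ 2) * ‖z‖ /
    ((1 - ‖z‖ ^ 2) * (1 + ‖z‖ ^ 2 - 2 * (lam * z).re))

/-- A starlike univalent function on the unit disk: analytic, `φ(0) = 0`, `φ'(0) = 1`,
univalent, and `Re(z φ'(z)/φ(z)) > 0` on the disk. -/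
def IsStarlike (φ : ℂ → ℂ) : Prop :=
  AnalyticOnNhd ℂ φ unitDisk ∧ φ 0 = 0 ∧ deriv φ 0 = 1 ∧
    Set.InjOn φ unitDisk ∧
    ∀ z ∈ unitDisk, z ≠ 0 → 0 < (z * deriv φ z / φ z).re

/-- `G(z) = (μ/π)·∫₀^z e^{iθ}ζ/(1 + (conj(λ)e^{iθ} − λ)ζ − e^{iθ}ζ²)² dζ`
(integral over the segment from `0` to `z`). -/
def Gfun (μ lam : ℂ) (θ : ℝ) (z : ℂ) : ℂ :=
  μ / (Real.pi : ℂ) *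
    ∫ t in (0:ℝ)..1,
      Complex.exp (θ * Complex.I) * (t * z) /
        (1 + ((starRingEnd ℂ) lam * Complex.exp (θ * Complex.I) - lam) * (t * z)
          - Complex.exp (θ * Complex.I) * (t * z) ^ 2) ^ 2 * z

end

theorem Complex.norm_sub_one_le_norm_add_one {w : ℂ} (hw : 0 ≤ w.re) : ‖w - 1‖ ≤ ‖w + 1‖ := by
  rw [← sq_le_sq₀ (norm_nonneg _) (norm_nonneg _), Complex.sq_norm, Complex.sq_norm, normSq_apply,
    normSq_apply]
  simp only [sub_re, add_re, sub_im, add_im, one_re, one_im]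
  nlinarith

theorem Complex.div_mem_slitPlane_of_re_pos {a b : ℂ} (ha : 0 < a.re) (hb : 0 < b.re) :
    a / b ∈ slitPlane := by
  rw [mem_slitPlane_iff]
  by_contra! h
  have hb0 : b ≠ 0 := fun h => by simp [h] at hb
  have : a.re = (a / b).re * b.re := by
    conv_lhs => rw [← div_mul_cancel₀ a hb0]
    simp [mul_re, h.2]
  nlinarith

theorem Complex.re_one_sub_pos {w : ℂ} (hw : ‖w‖ < 1) : 0 < (1 - w).re := by
  rw [sub_re, one_re, sub_pos]
  exact (re_le_norm w).trans_lt hw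

theorem Complex.one_sub_ne_zero {w : ℂ} (hw : ‖w‖ < 1) : 1 - w ≠ 0 := fun h => by
  simpa [h] using re_one_sub_pos hw

theorem Complex.norm_mul_lt_one {a z : ℂ} (ha : ‖a‖ ≤ 1) (hz : ‖z‖ < 1) : ‖a * z‖ < 1 := by
  rw [norm_mul]
  nlinarith [norm_nonneg a, norm_nonneg z]

theorem hasDerivAt_log_one_sub_div_one_sub_mul {a z : ℂ} (ha : ‖a‖ ≤ 1) (hz : ‖z‖ < 1) :
    HasDerivAt (fun w => log ((1 - w) / (1 - a * w))) ((a - 1) / ((1 - z) * (1 - a * z))) z := by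
  have haz := norm_mul_lt_one ha hz
  have hden : HasDerivAt (fun w => 1 - a * w) (-a) z := by
    simpa using ((hasDerivAt_id z).const_mul a).const_sub 1
  have hnum : HasDerivAt (fun w : ℂ => 1 - w) (-1) z := by
    simpa using (hasDerivAt_id z).const_sub 1
  refine ((hnum.div hden (one_sub_ne_zero haz)).clog
    (div_mem_slitPlane_of_re_pos (re_one_sub_pos hz) (re_one_sub_pos haz))).congr_deriv ?_
  simp only [Pi.div_apply]
  field_simp [one_sub_ne_zero hz, one_sub_ne_zero haz]
  ring

theorem mapsTo_cayley_of_re_nonneg {P : ℂ → ℂ} {s : Set ℂ} (hP : ∀ z ∈ s, 0 ≤ (P z).re) :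
    MapsTo (fun z => (P z - 1) / (P z + 1)) s (closedBall 0 1) := fun z hz => by
  rw [mem_closedBall_zero_iff, norm_div]
  exact div_le_one_of_le₀ (norm_sub_one_le_norm_add_one (hP z hz)) (norm_nonneg _)

theorem eqOn_mul_of_mapsTo_ball_of_hasDerivAt {ω : ℂ → ℂ} {a : ℂ}
    (hd : DifferentiableOn ℂ ω (ball 0 1)) (hmaps : MapsTo ω (ball 0 1) (closedBall 0 1))
    (h0 : ω 0 = 0) (ha : HasDerivAt ω a 0) (ha1 : ‖a‖ = 1) :
    EqOn ω (a * ·) (ball 0 1) := fun z hz => by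
  have hslope : ‖dslope ω 0 0‖ = 1 / 1 := by rw [dslope_same, ha.deriv, ha1, div_one]
  simpa [h0, dslope_same, ha.deriv, mul_comm] using
    affine_of_mapsTo_ball_of_norm_dslope_eq_div hd (by rwa [h0]) (mem_ball_self one_pos) hslope hz

theorem eqOn_of_re_nonneg_of_hasDerivAt_zero {P : ℂ → ℂ} {a : ℂ}
    (hd : DifferentiableOn ℂ P (ball 0 1)) (hre : ∀ z ∈ ball 0 1, 0 ≤ (P z).re)
    (h0 : P 0 = 1) (hP' : HasDerivAt P (2 * a) 0) (ha : ‖a‖ = 1) :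
    EqOn P (fun z => (1 + a * z) / (1 - a * z)) (ball 0 1) := by
  have hne : ∀ z ∈ ball (0 : ℂ) 1, P z + 1 ≠ 0 := fun z hz h => by
    have := congrArg re h
    simp only [add_re, one_re, zero_re] at this
    linarith [hre z hz]
  have hω' : HasDerivAt (fun z => (P z - 1) / (P z + 1)) a 0 := by
    refine ((hP'.sub_const 1).div (hP'.add_const 1) (hne 0 (mem_ball_self one_pos))).congr_deriv ?_
    rw [h0]
    ring
  have hω := eqOn_mul_of_mapsTo_ball_of_hasDerivAt
    (fun z hz => ((hd z hz).sub_const 1).div ((hd z hz).add_const 1) (hne z hz))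
    (mapsTo_cayley_of_re_nonneg hre) (by simp [h0]) hω' ha
  intro z hz
  have h := (div_eq_iff (hne z hz)).1 (hω hz)
  rw [eq_div_iff (one_sub_ne_zero (norm_mul_lt_one ha.le (mem_ball_zero_iff.1 hz)))]
  linear_combination h

theorem eqOn_mul_exp_of_hasDerivAt {U : Set ℂ} (hU : IsOpen U) (hU' : IsPreconnected U)
    {f h h' : ℂ → ℂ} {x₀ : ℂ} (hx₀ : x₀ ∈ U) (hf : ∀ z ∈ U, HasDerivAt f (h' z * f z) z)
    (hh : ∀ z ∈ U, HasDerivAt h (h' z) z) :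
    EqOn f (fun z => f x₀ * exp (h z - h x₀)) U := by
  set g := fun z => f z * exp (-h z)
  have hg : ∀ z ∈ U, HasDerivAt g 0 z := fun z hz => by
    refine ((hf z hz).mul (hh z hz).neg.cexp).congr_deriv ?_
    ring
  intro z hz
  have hgz : g z = g x₀ := hU.is_const_of_deriv_eq_zero hU'
    (fun w hw => (hg w hw).differentiableAt.differentiableWithinAt) (fun w hw => (hg w hw).deriv)
    hz hx₀
  simp only [g] at hgz
  calc f z = f z * exp (-h z) * exp (h z) := by
        rw [mul_assoc, ← exp_add, neg_add_cancel, exp_zero, mul_one]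
    _ = f x₀ * exp (h z - h x₀) := by
        rw [hgz, sub_eq_neg_add, exp_add]
        ring

theorem Pfun_zero (μ : ℂ) (f : ℂ → ℂ) : Pfun μ f 0 = 1 := by
  simp [Pfun]

theorem differentiableOn_Pfun (μ : ℂ) {f : ℂ → ℂ} (hf : AnalyticOnNhd ℂ f unitDisk)
    (hne : ∀ z ∈ unitDisk, f z ≠ 0) : DifferentiableOn ℂ (Pfun μ f) unitDisk := fun z hz => by
  have hz1 : 1 - z ≠ 0 := one_sub_ne_zero (mem_ball_zero_iff.1 hz)
  have hfz := (hf z hz).differentiableAt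
  have hf'z := (hf.deriv z hz).differentiableAt
  exact ((((differentiableAt_id.mul hf'z).div hfz (hne z hz)).const_mul _).add
    (((differentiableAt_const _).add differentiableAt_id).div
      ((differentiableAt_const _).sub differentiableAt_id) hz1)).differentiableWithinAt

theorem hasDerivAt_Pfun_zero (μ : ℂ) {f : ℂ → ℂ} (hf : DifferentiableAt ℂ f 0)
    (hf' : DifferentiableAt ℂ (deriv f) 0) (hf0 : f 0 ≠ 0) :
    HasDerivAt (Pfun μ f) (2 * Real.pi / μ * (deriv f 0 / f 0) + 2) 0 := by
  have hq : HasDerivAt (fun z => z * deriv f z / f z) (deriv f 0 / f 0) 0 := by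
    refine (((hasDerivAt_id 0).mul hf'.hasDerivAt).div hf.hasDerivAt hf0).congr_deriv ?_
    field_simp
    simp
  have hm : HasDerivAt (fun z : ℂ => (1 + z) / (1 - z)) 2 0 := by
    refine (((hasDerivAt_id 0).const_add 1).div ((hasDerivAt_id 0).const_sub 1)
      (by norm_num)).congr_deriv ?_
    norm_num
  exact (hq.const_mul _).add hm

theorem deriv_eq_of_Pfun_eq {μ lam z : ℂ} {f : ℂ → ℂ} (hμ : μ ≠ 0) (hz : z ≠ 0) (hfz : f z ≠ 0)
    (hz1 : 1 - z ≠ 0) (hlz : 1 - lam * z ≠ 0)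
    (hP : Pfun μ f z = (1 + lam * z) / (1 - lam * z)) :
    deriv f z = μ / Real.pi * ((lam - 1) / ((1 - z) * (1 - lam * z))) * f z := by
  have hzl : 1 - z * lam ≠ 0 := by rwa [mul_comm]
  unfold Pfun at hP
  field_simp at hP
  field_simp
  refine mul_left_cancel₀ (mul_ne_zero two_ne_zero hz) ?_
  linear_combination hP

theorem stmt15 (μ lam : ℂ) (hμ : 0 < μ.re) (hlam : ‖lam‖ = 1)
    (f : ℂ → ℂ) (hf : memF μ f) (hf' : deriv f 0 = μ / (Real.pi : ℂ) * (lam - 1)) :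
    ∀ z ∈ unitDisk,
      f z = Complex.exp (μ / (Real.pi : ℂ) * Complex.log ((1 - z) / (1 - lam * z))) := by
  obtain ⟨hfa, hfne, hf0, hre⟩ := hf
  have hμ0 : μ ≠ 0 := fun h => by simp [h] at hμ
  have h0 : (0 : ℂ) ∈ unitDisk := mem_ball_self one_pos
  have hP' : HasDerivAt (Pfun μ f) (2 * lam) 0 := by
    convert hasDerivAt_Pfun_zero μ (hfa 0 h0).differentiableAt
      (hfa.deriv 0 h0).differentiableAt (hf0 ▸ one_ne_zero) using 1
    rw [hf', hf0]
    field_simp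
    ring
  have hP := eqOn_of_re_nonneg_of_hasDerivAt_zero (differentiableOn_Pfun μ hfa hfne)
    (fun z hz => (hre z hz).le) (Pfun_zero μ f) hP' hlam
  have hode : ∀ z ∈ unitDisk,
      HasDerivAt f (μ / Real.pi * ((lam - 1) / ((1 - z) * (1 - lam * z))) * f z) z := by
    intro z hz
    have hz' := mem_ball_zero_iff.1 hz
    have := (hfa z hz).differentiableAt.hasDerivAt
    rcases eq_or_ne z 0 with rfl | hz0
    · simpa [hf', hf0] using this
    · rwa [deriv_eq_of_Pfun_eq hμ0 hz0 (hfne z hz) (one_sub_ne_zero hz')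
        (one_sub_ne_zero (norm_mul_lt_one hlam.le hz')) (hP hz)] at this
  intro z hz
  simpa [hf0] using eqOn_mul_exp_of_hasDerivAt isOpen_ball (convex_ball 0 1).isPreconnected h0 hode
    (fun w hw => (hasDerivAt_log_one_sub_div_one_sub_mul hlam.le
      (mem_ball_zero_iff.1 hw)).const_mul _) hz
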